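/- arXiv:1209.3467 — 2 statements merged into one kernel-verified Lean document; each statement's English description precedes it below -/
import Mathlib

section
/- Let G be a group. For every positive integer n, λ̄_n(G) = N_{n,1}(G). -/
/-- `H^m`: the subgroup generated by the `m`-th powers of elements of `H`. -/
def sPow {G : Type*} [Group G] (H : Subgroup G) (m : ℕ) : Subgroup G :=
  Subgroup.closure ((fun h => h ^ m) '' (H : Set G))

/-- `γ_n(G)`, the lower central series indexed so that `γ_1(G) = G`. -/
def gamma (G : Type*) [Group G] (n : ℕ) : Subgroup G :=
  (⊤ : Subgroup G).lowerCentralSeries (n - 1)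

/-- `N_{n,k}(G) = γ_k(G)^{4^{n-k}} ⋯ γ_n(G)` (product of normal subgroups = join). -/
def Nnk (G : Type*) [Group G] (n k : ℕ) : Subgroup G :=
  ⨆ i ∈ Finset.Icc k n, sPow (gamma G i) (4 ^ (n - i))

/-- The `λ̄`-series: `λ̄_1(G) = G`, `λ̄_{n+1}(G) = λ̄_n(G)^4 [λ̄_n(G), G]`. -/
def lambdaBar (G : Type*) [Group G] : ℕ → Subgroup G
  | 0 => ⊤
  | 1 => ⊤
  | (n + 2) => sPow (lambdaBar G (n + 1)) 4 ⊔ ⁅lambdaBar G (n + 1), (⊤ : Subgroup G)⁆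

/-- The lower `p`-central series: `λ_1(G) = G`, `λ_{n+1}(G) = λ_n(G)^p [λ_n(G), G]`. -/
def lowP (G : Type*) [Group G] (p : ℕ) : ℕ → Subgroup G
  | 0 => ⊤
  | 1 => ⊤
  | (n + 2) => sPow (lowP G p (n + 1)) p ⊔ ⁅lowP G p (n + 1), (⊤ : Subgroup G)⁆

/-- `Ω_i(G)`: subgroup generated by elements of order dividing `p^i`. -/
def Omega (G : Type*) [Group G] (p i : ℕ) : Subgroup G :=
  Subgroup.closure {x : G | x ^ p ^ i = 1}

/-- A finite `p`-group is `p`-central if `Ω_1(G) ≤ Z(G)` for odd `p`,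
resp. `Ω_2(G) ≤ Z(G)` for `p = 2`. -/
def IsPCentral (p : ℕ) (G : Type*) [Group G] : Prop :=
  if p = 2 then Omega G 2 2 ≤ Subgroup.center G else Omega G p 1 ≤ Subgroup.center G

instance gamma_normal (G : Type*) [Group G] (n : ℕ) : (gamma G n).Normal :=
  inferInstanceAs ((⊤ : Subgroup G).lowerCentralSeries (n - 1)).Normal

instance sPow_normal {G : Type*} [Group G] (H : Subgroup G) [hH : H.Normal] (m : ℕ) :
    (sPow H m).Normal := by
  constructor
  intro x hx g
  induction hx using Subgroup.closure_induction with
  | mem y hy =>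
    obtain ⟨h, hh, rfl⟩ := hy
    exact Subgroup.subset_closure ⟨g * h * g⁻¹, hH.conj_mem h hh g, by
      simp [conj_pow]⟩
  | one => simpa using (sPow H m).one_mem
  | mul a b _ _ ha hb =>
    have : g * (a * b) * g⁻¹ = (g * a * g⁻¹) * (g * b * g⁻¹) := by group
    rw [this]; exact (sPow H m).mul_mem ha hb
  | inv a _ ha =>
    have : g * a⁻¹ * g⁻¹ = (g * a * g⁻¹)⁻¹ := by group
    rw [this]; exact (sPow H m).inv_mem ha

theorem normal_iSup {G : Type*} [Group G] {ι : Sort*} (f : ι → Subgroup G)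
    (h : ∀ i, (f i).Normal) : (⨆ i, f i).Normal := by
  constructor
  intro x hx g
  refine Subgroup.iSup_induction f (C := fun y => g * y * g⁻¹ ∈ ⨆ i, f i) hx
    (fun i y hy => Subgroup.mem_iSup_of_mem i ((h i).conj_mem y hy g)) (by simpa using Subgroup.one_mem (⨆ i, f i)) ?_
  intro a b ha hb
  have : g * (a * b) * g⁻¹ = (g * a * g⁻¹) * (g * b * g⁻¹) := by group
  rw [this]; exact Subgroup.mul_mem _ ha hb

instance Nnk_normal (G : Type*) [Group G] (n k : ℕ) : (Nnk G n k).Normal :=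
  normal_iSup _ fun i => normal_iSup _ fun _ => inferInstance

instance lambdaBar_normal (G : Type*) [Group G] : ∀ n, (lambdaBar G n).Normal
  | 0 => inferInstanceAs (⊤ : Subgroup G).Normal
  | 1 => inferInstanceAs (⊤ : Subgroup G).Normal
  | (n + 2) => by
    haveI := lambdaBar_normal G (n + 1)
    exact inferInstanceAs
      (sPow (lambdaBar G (n + 1)) 4 ⊔ ⁅lambdaBar G (n + 1), (⊤ : Subgroup G)⁆).Normal

instance lowP_normal (G : Type*) [Group G] (p : ℕ) : ∀ n, (lowP G p n).Normal
  | 0 => inferInstanceAs (⊤ : Subgroup G).Normal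
  | 1 => inferInstanceAs (⊤ : Subgroup G).Normal
  | (n + 2) => by
    haveI := lowP_normal G p (n + 1)
    exact inferInstanceAs
      (sPow (lowP G p (n + 1)) p ⊔ ⁅lowP G p (n + 1), (⊤ : Subgroup G)⁆).Normal

/-!
The identity holds with any exponent `p` in place of `4`, for the lower `p`-series `lowP`, and is
proved by induction on `n`. The inclusion `N_{n+1,1} ≤ λ_{n+1}` is immediate. Conversely, modulo
`N_{n+1,1}` every generator `x^{p^{n-j}}` (`x ∈ γ_j`) of `N_{n,1}` is central with trivial `p`-th
power, so `N_{n,1}^p` and `[N_{n,1}, G]` vanish there. The power is clear; centrality is the claim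
`[x^{p^s}, g] ∈ N_{i+s+1,i+1}` for `x ∈ γ_i`, proved by strong induction on `s`: by the same
argument one level down, `N_{i+s,i+1}` is central of exponent `p` modulo `N_{i+s+1,i+1}`, and it
contains `c = [x^{p^{s-1}}, g]`, so `[x^{p^s}, g] = c^p` vanishes there.
-/

open scoped commutatorElement

open Subgroup

section

variable {G : Type*} [Group G]

theorem mem_sPow {H : Subgroup G} {x : G} (hx : x ∈ H) (m : ℕ) : x ^ m ∈ sPow H m :=
  subset_closure ⟨x, hx, rfl⟩

theorem sPow_le {H K : Subgroup G} {m : ℕ} (h : ∀ x ∈ H, x ^ m ∈ K) : sPow H m ≤ K :=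
  (closure_le K).mpr <| by
    rintro _ ⟨x, hx, rfl⟩
    exact h x hx

theorem sPow_one (H : Subgroup G) : sPow H 1 = H :=
  le_antisymm (sPow_le fun x hx => by simpa using hx) fun x hx => by simpa using mem_sPow hx 1

theorem gamma_succ {n : ℕ} (hn : 1 ≤ n) : gamma G (n + 1) = ⁅gamma G n, ⊤⁆ := by
  obtain ⟨m, rfl⟩ := Nat.exists_eq_add_of_le' hn
  rfl

theorem commutatorElement_mem_gamma_succ {i : ℕ} {x : G} (hx : x ∈ gamma G i) (g : G) :
    ⁅x, g⁆ ∈ gamma G (i + 1) := by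
  rcases Nat.eq_zero_or_pos i with rfl | hi
  · exact mem_top _
  · rw [gamma_succ hi]
    exact commutator_mem_commutator hx (mem_top g)

theorem commutatorElement_pow_left_of_mem_center {y g : G} (h : ⁅y, g⁆ ∈ center G) (k : ℕ) :
    ⁅y ^ k, g⁆ = ⁅y, g⁆ ^ k := by
  induction k with
  | zero => simp [commutatorElement_def]
  | succ k ih =>
    calc ⁅y ^ (k + 1), g⁆ = y * ⁅y ^ k, g⁆ * y⁻¹ * ⁅y, g⁆ := by
          simp only [commutatorElement_def, pow_succ']
          group
      _ = y * ⁅y, g⁆ ^ k * y⁻¹ * ⁅y, g⁆ := by rw [ih]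
      _ = ⁅y, g⁆ ^ k * y * y⁻¹ * ⁅y, g⁆ := by rw [mem_center_iff.mp (pow_mem h k) y]
      _ = ⁅y, g⁆ ^ (k + 1) := by rw [mul_inv_cancel_right, pow_succ]

end

def centerKerPow (H : Type*) [Group H] (p : ℕ) : Subgroup H where
  carrier := {a | a ∈ center H ∧ a ^ p = 1}
  one_mem' := ⟨one_mem _, one_pow p⟩
  mul_mem' := by
    rintro a b ⟨ha, ha1⟩ ⟨hb, hb1⟩
    refine ⟨mul_mem ha hb, ?_⟩
    rw [(show Commute a b from (mem_center_iff.mp ha b).symm).mul_pow, ha1, hb1, one_mul]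
  inv_mem' := by
    rintro a ⟨ha, ha1⟩
    exact ⟨inv_mem ha, by rw [inv_pow, ha1, inv_one]⟩

section

variable {G : Type*} [Group G] {p : ℕ}

theorem commutatorElement_pow_eq_one_of_mem_centerKerPow {a b : G}
    (h : ⁅a, b⁆ ∈ centerKerPow G p) : ⁅a ^ p, b⁆ = 1 := by
  rw [commutatorElement_pow_left_of_mem_center h.1, h.2]

variable {N : Subgroup G} [N.Normal]

theorem mk_mem_center_iff {a : G} : (a : G ⧸ N) ∈ center (G ⧸ N) ↔ ∀ g, ⁅a, g⁆ ∈ N := by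
  have hcomm (g : G) : ⁅a, g⁆ ∈ N ↔ (g : G ⧸ N) * a = a * g := by
    rw [← QuotientGroup.eq_one_iff, ← QuotientGroup.mk'_apply, map_commutatorElement,
      commutatorElement_eq_one_iff_mul_comm, eq_comm]
    rfl
  simp only [hcomm, mem_center_iff]
  exact ⟨fun h g => h g, fun h q => QuotientGroup.induction_on q h⟩

theorem mem_comap_centerKerPow_iff {a : G} :
    a ∈ (centerKerPow (G ⧸ N) p).comap (QuotientGroup.mk' N) ↔
      (∀ g, ⁅a, g⁆ ∈ N) ∧ a ^ p ∈ N := by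
  rw [← mk_mem_center_iff, ← QuotientGroup.eq_one_iff (a ^ p)]
  rfl

theorem sPow_le_of_le_comap_centerKerPow {K : Subgroup G}
    (hK : K ≤ (centerKerPow (G ⧸ N) p).comap (QuotientGroup.mk' N)) : sPow K p ≤ N :=
  sPow_le fun _ ha => (mem_comap_centerKerPow_iff.mp (hK ha)).2

theorem commutator_top_le_of_le_comap_centerKerPow {K : Subgroup G}
    (hK : K ≤ (centerKerPow (G ⧸ N) p).comap (QuotientGroup.mk' N)) : ⁅K, ⊤⁆ ≤ N :=
  commutator_le.mpr fun _ ha g _ => (mem_comap_centerKerPow_iff.mp (hK ha)).1 g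

end

def powNnk (G : Type*) [Group G] (p n k : ℕ) : Subgroup G :=
  ⨆ i ∈ Finset.Icc k n, sPow (gamma G i) (p ^ (n - i))

instance powNnk_normal (G : Type*) [Group G] (p n k : ℕ) : (powNnk G p n k).Normal :=
  normal_iSup _ fun _ => normal_iSup _ fun _ => inferInstance

section

variable {G : Type*} [Group G] {p : ℕ}

theorem pow_mem_powNnk {n k j : ℕ} (hj : j ∈ Finset.Icc k n) {x : G} (hx : x ∈ gamma G j) :
    x ^ p ^ (n - j) ∈ powNnk G p n k :=
  le_iSup₂ (f := fun i (_ : i ∈ Finset.Icc k n) => sPow (gamma G i) (p ^ (n - i))) j hj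
    (mem_sPow hx _)

theorem gamma_le_powNnk {n k : ℕ} (hk : k ≤ n) : gamma G n ≤ powNnk G p n k := fun x hx => by
  simpa using pow_mem_powNnk (p := p) (Finset.mem_Icc.mpr ⟨hk, le_rfl⟩) hx

theorem powNnk_anti {n k k' : ℕ} (h : k' ≤ k) : powNnk G p n k ≤ powNnk G p n k' :=
  biSup_mono fun j hj => by
    rw [Finset.mem_Icc] at *
    omega

theorem powNnk_le_comap_centerKerPow {n k : ℕ}
    (hcomm : ∀ j ∈ Finset.Icc k n, ∀ x ∈ gamma G j, ∀ g,
      ⁅x ^ p ^ (n - j), g⁆ ∈ powNnk G p (n + 1) k) :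
    powNnk G p n k ≤
      (centerKerPow (G ⧸ powNnk G p (n + 1) k) p).comap (QuotientGroup.mk' _) :=
  iSup₂_le fun j hj => sPow_le fun x hx => by
    obtain ⟨hkj, hjn⟩ := Finset.mem_Icc.mp hj
    refine mem_comap_centerKerPow_iff.mpr ⟨hcomm j hj x hx, ?_⟩
    rw [← pow_mul, ← pow_succ, show n - j + 1 = n + 1 - j by omega]
    exact pow_mem_powNnk (Finset.mem_Icc.mpr ⟨hkj, by omega⟩) hx

theorem commutatorElement_pow_pow_mem_powNnk (s : ℕ) {i : ℕ} {x : G} (hx : x ∈ gamma G i)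
    (g : G) : ⁅x ^ p ^ s, g⁆ ∈ powNnk G p (i + s + 1) (i + 1) := by
  induction s using Nat.strong_induction_on generalizing i x g with
  | _ s ih =>
  rcases s with _ | s
  · simpa using gamma_le_powNnk le_rfl (commutatorElement_mem_gamma_succ hx g)
  · have hK := powNnk_le_comap_centerKerPow (p := p) (n := i + s + 1) (k := i + 1)
      fun j hj y hy g' => by
        obtain ⟨hij, hjn⟩ := Finset.mem_Icc.mp hj
        have h := ih (i + s + 1 - j) (by omega) hy g'
        rw [show j + (i + s + 1 - j) + 1 = i + s + 1 + 1 by omega] at h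
        exact powNnk_anti (by omega) h
    have hc := hK (ih s (by omega) hx g)
    rw [mem_comap, map_commutatorElement] at hc
    rw [show i + (s + 1) + 1 = i + s + 1 + 1 by omega, ← QuotientGroup.eq_one_iff, pow_succ,
      pow_mul, ← QuotientGroup.mk'_apply, map_commutatorElement, map_pow, map_pow]
    exact commutatorElement_pow_eq_one_of_mem_centerKerPow hc

theorem powNnk_succ_le {n : ℕ} (hn : 1 ≤ n) :
    powNnk G p (n + 1) 1 ≤ sPow (powNnk G p n 1) p ⊔ ⁅powNnk G p n 1, ⊤⁆ := by
  refine iSup₂_le fun j hj => ?_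
  obtain ⟨hj1, hjn⟩ := Finset.mem_Icc.mp hj
  rcases hjn.eq_or_lt with rfl | hlt
  · rw [Nat.sub_self, pow_zero, sPow_one, gamma_succ hn]
    exact le_sup_of_le_right (commutator_mono (gamma_le_powNnk hn) le_rfl)
  · refine le_sup_of_le_left (sPow_le fun x hx => ?_)
    rw [show n + 1 - j = n - j + 1 by omega, pow_succ, pow_mul]
    exact mem_sPow (pow_mem_powNnk (Finset.mem_Icc.mpr ⟨hj1, by omega⟩) hx) p

theorem lowP_succ {n : ℕ} (hn : 1 ≤ n) :
    lowP G p (n + 1) = sPow (lowP G p n) p ⊔ ⁅lowP G p n, ⊤⁆ := by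
  obtain ⟨m, rfl⟩ := Nat.exists_eq_add_of_le' hn
  rfl

theorem lowP_eq_powNnk (p : ℕ) {n : ℕ} (hn : 1 ≤ n) : lowP G p n = powNnk G p n 1 := by
  induction n, hn using Nat.le_induction with
  | base => exact (eq_top_iff.mpr fun x _ => gamma_le_powNnk le_rfl (mem_top x)).symm
  | succ n hn ih =>
    have hK := powNnk_le_comap_centerKerPow (G := G) (p := p) (n := n) (k := 1)
      fun j hj x hx g => by
        obtain ⟨hj1, hjn⟩ := Finset.mem_Icc.mp hj
        have h := commutatorElement_pow_pow_mem_powNnk (p := p) (n - j) hx g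
        rw [show j + (n - j) + 1 = n + 1 by omega] at h
        exact powNnk_anti (by omega) h
    rw [lowP_succ hn, ih]
    exact le_antisymm
      (sup_le (sPow_le_of_le_comap_centerKerPow hK) (commutator_top_le_of_le_comap_centerKerPow hK))
      (powNnk_succ_le hn)

theorem lambdaBar_eq_lowP : ∀ n, lambdaBar G n = lowP G 4 n
  | 0 | 1 => rfl
  | n + 2 => by rw [lambdaBar, lowP, lambdaBar_eq_lowP (n + 1)]

end

theorem stmt_2 (G : Type*) [Group G] (n : ℕ) (hn : 1 ≤ n) :
    lambdaBar G n = Nnk G n 1 := by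
  rw [lambdaBar_eq_lowP]
  exact lowP_eq_powNnk 4 hn
end

section
/- Let n ≥ 1 and r ≥ 2 be integers, and let G be a finite 2-central group (i.e. a finite 2-group with Ω_2(G) ≤ Z(G)) which can be generated by r elements and whose exponent divides 2^n. Then G is a homomorphic image of ^mG_r where m = ⌈n/2⌉ + 1; that is, there exists a surjective group homomorphism from F_r/λ̄_{⌈n/2⌉+2}(F_r) onto G. -/
/-!
In a 2-central 2-group the elements of order dividing 2 form a central subgroup `Ω₁`, and
`G ⧸ Ω₁` is again 2-central. Since `x ^ 2 ^ (e + 1) = 1` iff the image of `x` in `G ⧸ Ω₁`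
satisfies `x ^ 2 ^ e = 1`, induction on `e` through these quotients shows that the elements with
`x ^ 2 ^ e = 1` form the subgroup `Ω_e`, and that `h ^ 2 ^ (e + 2) = 1` implies
`⁅h, g⁆ ^ 2 ^ e = 1`. So each step of the `λ̄`-series divides the exponent bound by 4,
`λ̄_{k+1}(G) ≤ Ω_{n-2k}(G)`, and `λ̄_{k+1}(G) = 1` once `n ≤ 2k`. As `λ̄` is carried into `λ̄` by
homomorphisms, any surjection `F_r → G` factors through `F_r / λ̄_{⌈n/2⌉+2}(F_r)`.
-/

open scoped commutatorElement

section Omega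

variable {G : Type*} [Group G]

theorem Omega_le_iff {p i : ℕ} {H : Subgroup G} :
    Omega G p i ≤ H ↔ ∀ x : G, x ^ p ^ i = 1 → x ∈ H :=
  Subgroup.closure_le H

theorem mem_Omega_iff_of_mul {p i : ℕ}
    (hmul : ∀ x y : G, x ^ p ^ i = 1 → y ^ p ^ i = 1 → (x * y) ^ p ^ i = 1) {x : G} :
    x ∈ Omega G p i ↔ x ^ p ^ i = 1 := by
  refine ⟨fun hx => ?_, fun hx => Subgroup.subset_closure hx⟩
  induction hx using Subgroup.closure_induction with
  | mem y hy => exact hy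
  | one => exact one_pow _
  | mul y z _ _ hy hz => exact hmul y z hy hz
  | inv y _ hy => rw [inv_pow, hy, inv_one]

theorem Omega_zero (p : ℕ) : Omega G p 0 = ⊥ := by
  simp [Omega]

instance Omega_normal (p i : ℕ) : (Omega G p i).Normal := by
  rw [← Subgroup.normalizer_eq_top_iff, eq_top_iff]
  refine le_trans (fun g _ => ?_) (Subgroup.normalizer_le_normalizer_closure _)
  exact Subgroup.mem_set_normalizer_iff.2 fun x => by simp [conj_pow]

end Omega

theorem pow_two_pow_eq_one_of_le {G : Type*} [Group G] {x : G} {a b : ℕ}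
    (h : x ^ 2 ^ a = 1) (hab : a ≤ b) : x ^ 2 ^ b = 1 :=
  orderOf_dvd_iff_pow_eq_one.1 ((orderOf_dvd_of_pow_eq_one h).trans (pow_dvd_pow 2 hab))

theorem QuotientGroup.mk_commutatorElement {G : Type*} [Group G] (N : Subgroup G) [N.Normal]
    (a b : G) : ((⁅a, b⁆ : G) : G ⧸ N) = ⁅(a : G ⧸ N), (b : G ⧸ N)⁆ :=
  map_commutatorElement (QuotientGroup.mk' N) a b

section TwoCentral

variable {G : Type*} [Group G]

theorem commute_of_pow_four_eq_one (hc : Omega G 2 2 ≤ Subgroup.center G) {x : G}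
    (hx : x ^ 4 = 1) (y : G) : Commute x y :=
  (Subgroup.mem_center_iff.1 (hc (Subgroup.subset_closure hx)) y).symm

theorem mem_Omega_one_iff (hc : Omega G 2 2 ≤ Subgroup.center G) {x : G} :
    x ∈ Omega G 2 1 ↔ x ^ 2 = 1 := by
  refine (mem_Omega_iff_of_mul fun x y hx hy => ?_).trans (by rw [pow_one])
  rw [pow_one] at hx hy ⊢
  have hx4 : x ^ 4 = 1 := by rw [show 4 = 2 * 2 from rfl, pow_mul, hx, one_pow]
  rw [(commute_of_pow_four_eq_one hc hx4 y).mul_pow, hx, hy, one_mul]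

theorem sq_eq_one_of_conj_eq_inv (hc : Omega G 2 2 ≤ Subgroup.center G) {h c : G}
    (hconj : h * c * h⁻¹ = c⁻¹) : ∀ s : ℕ, c ^ 2 ^ s = 1 → c ^ 2 = 1
  | 0, hs => by rw [pow_zero, pow_one] at hs; rw [hs, one_pow]
  | 1, hs => hs
  | s + 2, hs => by
    refine sq_eq_one_of_conj_eq_inv hc hconj (s + 1) ?_
    -- `c ^ 2 ^ s` has order dividing 4, so it is central; but conjugation by `h` inverts it.
    have hcentral : Commute (c ^ 2 ^ s) h :=
      commute_of_pow_four_eq_one hc (by rw [← pow_mul]; rwa [pow_add] at hs) h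
    have hinv : c ^ 2 ^ s = (c ^ 2 ^ s)⁻¹ := by
      rw [← inv_pow, ← hconj, conj_pow, ← hcentral.eq, mul_inv_cancel_right]
    rw [pow_succ, pow_mul, sq]
    exact mul_eq_one_iff_eq_inv.2 hinv

theorem commutatorElement_sq_eq_one (hp : IsPGroup 2 G) (hc : Omega G 2 2 ≤ Subgroup.center G)
    {h : G} (h8 : h ^ 8 = 1) (g : G) : ⁅h, g⁆ ^ 2 = 1 := by
  -- `h ^ 2` is central and `⁅h ^ 2, g⁆ = (h ⁅h, g⁆ h⁻¹) ⁅h, g⁆`,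
  -- so conjugation by `h` inverts `⁅h, g⁆`.
  have hsq : ⁅h ^ 2, g⁆ = 1 := commutatorElement_eq_one_iff_commute.2 <|
    commute_of_pow_four_eq_one hc (by rw [← pow_mul]; exact h8) g
  have hconj : h * ⁅h, g⁆ * h⁻¹ = ⁅h, g⁆⁻¹ := by
    refine eq_inv_of_mul_eq_one_left (hsq ▸ ?_)
    simp only [commutatorElement_def, sq]
    group
  obtain ⟨s, hs⟩ := hp ⁅h, g⁆
  exact sq_eq_one_of_conj_eq_inv hc hconj s hs

theorem QuotientGroup.mk_pow_two_pow_eq_one_iff (hc : Omega G 2 2 ≤ Subgroup.center G) {x : G}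
    {e : ℕ} : (x : G ⧸ Omega G 2 1) ^ 2 ^ e = 1 ↔ x ^ 2 ^ (e + 1) = 1 := by
  rw [← QuotientGroup.mk_pow, QuotientGroup.eq_one_iff, mem_Omega_one_iff hc, ← pow_mul, pow_succ]

theorem Omega_quotient_le_center (hp : IsPGroup 2 G) (hc : Omega G 2 2 ≤ Subgroup.center G) :
    Omega (G ⧸ Omega G 2 1) 2 2 ≤ Subgroup.center (G ⧸ Omega G 2 1) := by
  refine Omega_le_iff.2 fun q hq => Subgroup.mem_center_iff.2 fun q' => ?_
  induction q using QuotientGroup.induction_on with | H x =>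
  induction q' using QuotientGroup.induction_on with | H g =>
  have hx8 : x ^ 8 = 1 := (QuotientGroup.mk_pow_two_pow_eq_one_iff hc).1 hq
  have hxg : ⁅x, g⁆ ∈ Omega G 2 1 :=
    (mem_Omega_one_iff hc).2 (commutatorElement_sq_eq_one hp hc hx8 g)
  refine (commutatorElement_eq_one_iff_commute.1 ?_).symm
  rwa [← QuotientGroup.mk_commutatorElement, QuotientGroup.eq_one_iff]

theorem mul_pow_two_pow_eq_one (hp : IsPGroup 2 G) (hc : Omega G 2 2 ≤ Subgroup.center G)
    (e : ℕ) {x y : G} (hx : x ^ 2 ^ e = 1) (hy : y ^ 2 ^ e = 1) : (x * y) ^ 2 ^ e = 1 := by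
  induction e generalizing G with
  | zero => rw [pow_zero, pow_one] at *; rw [hx, hy, one_mul]
  | succ e ih =>
    simp only [← QuotientGroup.mk_pow_two_pow_eq_one_iff hc, QuotientGroup.mk_mul] at *
    exact ih (hp.to_quotient _) (Omega_quotient_le_center hp hc) hx hy

theorem commutatorElement_pow_two_pow_eq_one (hp : IsPGroup 2 G)
    (hc : Omega G 2 2 ≤ Subgroup.center G) (e : ℕ) {h : G} (hh : h ^ 2 ^ (e + 2) = 1) (g : G) :
    ⁅h, g⁆ ^ 2 ^ e = 1 := by
  induction e generalizing G with
  | zero =>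
    rw [pow_zero, pow_one, commutatorElement_eq_one_iff_commute]
    exact commute_of_pow_four_eq_one hc hh g
  | succ e ih =>
    rw [← QuotientGroup.mk_pow_two_pow_eq_one_iff hc] at hh ⊢
    rw [QuotientGroup.mk_commutatorElement]
    exact ih (hp.to_quotient _) (Omega_quotient_le_center hp hc) hh _

theorem mem_Omega_iff_pow_eq_one (hp : IsPGroup 2 G) (hc : Omega G 2 2 ≤ Subgroup.center G)
    {e : ℕ} {x : G} : x ∈ Omega G 2 e ↔ x ^ 2 ^ e = 1 :=
  mem_Omega_iff_of_mul fun _ _ => mul_pow_two_pow_eq_one hp hc e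

end TwoCentral

theorem sPow_mono {G : Type*} [Group G] {H K : Subgroup G} (hHK : H ≤ K) (m : ℕ) :
    sPow H m ≤ sPow K m :=
  Subgroup.closure_mono (Set.image_mono hHK)

theorem map_sPow {F G : Type*} [Group F] [Group G] (φ : F →* G) (H : Subgroup F) (m : ℕ) :
    (sPow H m).map φ = sPow (H.map φ) m := by
  simp only [sPow, MonoidHom.map_closure, Subgroup.coe_map, Set.image_image, map_pow]

theorem map_lambdaBar_le {F G : Type*} [Group F] [Group G] (φ : F →* G) :
    ∀ k, (lambdaBar F k).map φ ≤ lambdaBar G k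
  | 0 | 1 => le_top
  | k + 2 => by
    rw [lambdaBar, lambdaBar, Subgroup.map_sup, map_sPow, Subgroup.map_commutator]
    exact sup_le_sup (sPow_mono (map_lambdaBar_le φ (k + 1)) 4)
      (Subgroup.commutator_mono (map_lambdaBar_le φ (k + 1)) le_top)

theorem lambdaBar_le_Omega {G : Type*} [Group G] (hp : IsPGroup 2 G)
    (hc : Omega G 2 2 ≤ Subgroup.center G) {n : ℕ} (hexp : Monoid.exponent G ∣ 2 ^ n) :
    ∀ k, lambdaBar G (k + 1) ≤ Omega G 2 (n - 2 * k)
  | 0 => fun x _ => Subgroup.subset_closure (Monoid.exponent_dvd_iff_forall_pow_eq_one.1 hexp x)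
  | k + 1 => by
    have ih := lambdaBar_le_Omega hp hc hexp k
    rw [lambdaBar]
    refine sup_le ((Subgroup.closure_le _).2 ?_) (Subgroup.commutator_le.2 ?_)
    · rintro _ ⟨h, hh, rfl⟩
      have hh' := (mem_Omega_iff_pow_eq_one hp hc).1 (ih hh)
      rw [SetLike.mem_coe, mem_Omega_iff_pow_eq_one hp hc, ← pow_mul, mul_comm,
        show 4 = 2 ^ 2 from rfl, ← pow_add]
      exact pow_two_pow_eq_one_of_le hh' (by omega)
    · intro h hh g _
      have hh' := (mem_Omega_iff_pow_eq_one hp hc).1 (ih hh)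
      exact (mem_Omega_iff_pow_eq_one hp hc).2 <|
        commutatorElement_pow_two_pow_eq_one hp hc _ (pow_two_pow_eq_one_of_le hh' (by omega)) g

theorem lambdaBar_eq_bot {G : Type*} [Group G] (hp : IsPGroup 2 G)
    (hc : Omega G 2 2 ≤ Subgroup.center G) {n : ℕ} (hexp : Monoid.exponent G ∣ 2 ^ n) {k : ℕ}
    (hk : n ≤ 2 * k) : lambdaBar G (k + 1) = ⊥ := by
  simpa [Nat.sub_eq_zero_of_le hk, Omega_zero] using lambdaBar_le_Omega hp hc hexp k

theorem FreeGroup.exists_surjective_of_closure_finset {G : Type*} [Group G] {r : ℕ}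
    (hgen : ∃ S : Finset G, S.card ≤ r ∧ Subgroup.closure (S : Set G) = ⊤) :
    ∃ φ : FreeGroup (Fin r) →* G, Function.Surjective φ := by
  obtain ⟨S, hSr, hS⟩ := hgen
  let ι : S → Fin r := Fin.castLE hSr ∘ S.equivFin
  have hι : Function.Injective ι := (Fin.castLE_injective hSr).comp S.equivFin.injective
  refine ⟨FreeGroup.lift (Function.extend ι Subtype.val 1), ?_⟩
  rw [← MonoidHom.range_eq_top, FreeGroup.range_lift_eq_closure, eq_top_iff, ← hS]
  exact Subgroup.closure_mono fun s hs => ⟨ι ⟨s, hs⟩, hι.extend_apply _ _ _⟩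

theorem stmt_13_general (n r : ℕ)
    (G : Type*) [Group G] (hpg : IsPGroup 2 G)
    (hcent : Omega G 2 2 ≤ Subgroup.center G)
    (hgen : ∃ S : Finset G, S.card ≤ r ∧ Subgroup.closure (S : Set G) = ⊤)
    (hexp : Monoid.exponent G ∣ 2 ^ n) :
    ∃ f : (FreeGroup (Fin r) ⧸ lambdaBar (FreeGroup (Fin r)) ((n + 1) / 2 + 2)) →* G,
      Function.Surjective f := by
  obtain ⟨φ, hφ⟩ := FreeGroup.exists_surjective_of_closure_finset hgen
  have hker : lambdaBar (FreeGroup (Fin r)) ((n + 1) / 2 + 2) ≤ φ.ker := by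
    rw [← Subgroup.map_eq_bot_iff, eq_bot_iff,
      ← lambdaBar_eq_bot hpg hcent hexp (k := (n + 1) / 2 + 1) (by omega)]
    exact map_lambdaBar_le φ _
  exact ⟨QuotientGroup.lift _ φ hker, QuotientGroup.lift_surjective_of_surjective _ φ hφ hker⟩

theorem stmt_13 (n r : ℕ) (hn : 1 ≤ n) (hr : 2 ≤ r)
    (G : Type*) [Group G] [Finite G] (hpg : IsPGroup 2 G)
    (hcent : Omega G 2 2 ≤ Subgroup.center G)
    (hgen : ∃ S : Finset G, S.card ≤ r ∧ Subgroup.closure (S : Set G) = ⊤)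
    (hexp : Monoid.exponent G ∣ 2 ^ n) :
    ∃ f : (FreeGroup (Fin r) ⧸ lambdaBar (FreeGroup (Fin r)) ((n + 1) / 2 + 2)) →* G,
      Function.Surjective f :=
  stmt_13_general n r G hpg hcent hgen hexp
end
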